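/- arXiv:0806.0909 — 10 statements merged into one kernel-verified Lean document; each statement's English description precedes it below -/
import Mathlib

section
/- For every ξ > 0 the strict inequalities exp(−ξ) < 1/(1+ξ) < 1 − exp(−1/ξ) hold. Consequently, in the single-interferer network the spatial contentions satisfy γ^{0/1} < γ^{1/1} < γ^{1/0}: fading in the desired link is harmful whereas fading in the interferer's channel is helpful. -/
/-! Both inequalities are instances of `exp (-t) < 1 / (1 + t)`, i.e. of `1 + t < exp t`:
the first at `t = ξ`, the second at `t = 1 / ξ`, because `1 - 1 / (1 + ξ) = 1 / (1 + 1 / ξ)`. -/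

namespace Real

theorem exp_neg_lt_one_div_one_add {x : ℝ} (hx₁ : -1 < x) (hx₀ : x ≠ 0) :
    exp (-x) < 1 / (1 + x) := by
  rw [exp_neg, one_div]
  exact inv_strictAnti₀ (by linarith) (by linarith [add_one_lt_exp hx₀])

end Real

theorem one_sub_one_div_one_add {x : ℝ} (hx₁ : 1 + x ≠ 0) (hx₀ : x ≠ 0) :
    1 - 1 / (1 + x) = 1 / (1 + 1 / x) := by
  rw [one_add_div hx₀, one_div_div, one_sub_div hx₁]
  ring

/-- For every `ξ > 0`, `exp (-ξ) < 1 / (1 + ξ) < 1 - exp (-1/ξ)`; that is, the spatial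
contentions of the single-interferer network satisfy `γ^{0/1} < γ^{1/1} < γ^{1/0}`. -/
theorem spatial_contention_ordering (ξ : ℝ) (hξ : 0 < ξ) :
    Real.exp (-ξ) < 1 / (1 + ξ) ∧ 1 / (1 + ξ) < 1 - Real.exp (-(1 / ξ)) := by
  have hinv : 0 < 1 / ξ := one_div_pos.mpr hξ
  refine ⟨Real.exp_neg_lt_one_div_one_add (by linarith) hξ.ne', ?_⟩
  have h := Real.exp_neg_lt_one_div_one_add (by linarith) hinv.ne'
  rw [← one_sub_one_div_one_add (by linarith) hξ.ne'] at h
  linarith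
end

section
/- For real α > 2 and θ > 0, the improper Riemann integral ∫₀^∞ 2πr·(1 − exp(−θ r^{−α})) dr equals π Γ(1 − 2/α) θ^{2/α}, where Γ is the Gamma function. Consequently, in a two-dimensional Poisson network where only the desired link fades (non-fading interferers), p_s^{1/0} = exp(−p π Γ(1−2/α) θ^{2/α}), and the spatial contention π Γ(1−2/α) θ^{2/α} exceeds that of the fully Rayleigh-fading case. -/
/-!
Substituting `w = θ r^(-α)` turns the integral into
`(2π/α) θ^(2/α) ∫₀^∞ (1 - e^(-w)) w^(-s-1) dw` with `s = 2/α ∈ (0, 1)`, and one integration by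
parts against `-w^(-s)` turns the latter integral into `s⁻¹ ∫₀^∞ e^(-w) w^(-s) dw = Γ(1-s)/s`.
For the comparison, the reflection formula writes the Rayleigh contention as
`π θ^s Γ(1+s) Γ(1-s)`, and `Γ(1+s) < 1` because `Γ` is convex with `Γ(1) = Γ(2) = 1` and
`Γ(3/2) < 1`.
-/

open MeasureTheory Set Real Filter Topology

namespace Real

theorem Gamma_lt_one_of_mem_Ioo {x : ℝ} (hx : x ∈ Ioo 1 2) : Gamma x < 1 := by
  obtain ⟨h1, h2⟩ := hx
  have h32 := Gamma_three_div_two_lt_one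
  rcases le_total x (3 / 2) with h | h
  · have := convexOn_Gamma.2 (mem_Ioi.2 one_pos) (mem_Ioi.2 (by norm_num : (0 : ℝ) < 3 / 2))
      (by linarith : 0 ≤ 3 - 2 * x) (by linarith : 0 ≤ 2 * x - 2) (by ring)
    simp only [smul_eq_mul, Gamma_one] at this
    rw [show (3 - 2 * x) * 1 + (2 * x - 2) * (3 / 2 : ℝ) = x by ring] at this
    nlinarith
  · have := convexOn_Gamma.2 (mem_Ioi.2 (by norm_num : (0 : ℝ) < 3 / 2)) (mem_Ioi.2 two_pos)
      (by linarith : 0 ≤ 4 - 2 * x) (by linarith : 0 ≤ 2 * x - 3) (by ring)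
    simp only [smul_eq_mul, Gamma_two] at this
    rw [show (4 - 2 * x) * (3 / 2 : ℝ) + (2 * x - 3) * 2 = x by ring] at this
    nlinarith

theorem Gamma_one_add_mul_Gamma_one_sub {s : ℝ} (hs : s ≠ 0) :
    Gamma (1 + s) * Gamma (1 - s) = π * s / sin (π * s) := by
  rw [add_comm, Gamma_add_one hs, mul_assoc, Gamma_mul_Gamma_one_sub]
  ring

theorem pi_mul_div_sin_lt_Gamma_one_sub {s : ℝ} (hs0 : 0 < s) (hs1 : s < 1) :
    π * s / sin (π * s) < Gamma (1 - s) := by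
  rw [← Gamma_one_add_mul_Gamma_one_sub hs0.ne']
  exact mul_lt_of_lt_one_left (Gamma_pos_of_pos (by linarith))
    (Gamma_lt_one_of_mem_Ioo ⟨by linarith, by linarith⟩)

end Real

lemma one_sub_exp_neg_nonneg {x : ℝ} (hx : 0 ≤ x) : 0 ≤ 1 - exp (-x) := by
  simpa using hx

lemma one_sub_exp_neg_le_self (x : ℝ) : 1 - exp (-x) ≤ x := by
  linarith [one_sub_le_exp_neg x]

lemma one_sub_exp_neg_le_one (x : ℝ) : 1 - exp (-x) ≤ 1 := by
  linarith [exp_pos (-x)]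

section

variable {s : ℝ}

lemma integrableOn_one_sub_exp_neg_mul_rpow (hs0 : 0 < s) (hs1 : s < 1) :
    IntegrableOn (fun w => (1 - exp (-w)) * w ^ (-s - 1)) (Ioi 0) := by
  have hmeas : AEStronglyMeasurable (fun w : ℝ => (1 - exp (-w)) * w ^ (-s - 1)) :=
    (by fun_prop : Measurable fun w : ℝ => (1 - exp (-w)) * w ^ (-s - 1)).aestronglyMeasurable
  rw [← Ioc_union_Ioi_eq_Ioi zero_le_one, integrableOn_union]
  constructor
  · refine Integrable.mono' ((intervalIntegral.intervalIntegrable_rpow' (a := 0) (b := 1)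
      (by linarith : -1 < -s)).1) hmeas.restrict ?_
    refine (ae_restrict_iff' measurableSet_Ioc).2 (ae_of_all _ fun w ⟨hw, _⟩ => ?_)
    rw [norm_of_nonneg (mul_nonneg (one_sub_exp_neg_nonneg hw.le) (by positivity)),
      rpow_sub_one hw.ne', mul_div_left_comm]
    exact mul_le_of_le_one_right (by positivity) ((div_le_one hw).2 (one_sub_exp_neg_le_self w))
  · refine Integrable.mono' (integrableOn_Ioi_rpow_of_lt (a := -s - 1) (by linarith) one_pos)
      hmeas.restrict ?_
    refine (ae_restrict_iff' measurableSet_Ioi).2 (ae_of_all _ fun w (hw : 1 < w) => ?_)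
    rw [norm_of_nonneg (mul_nonneg (one_sub_exp_neg_nonneg (by linarith)) (by positivity))]
    exact mul_le_of_le_one_left (by positivity) (one_sub_exp_neg_le_one w)

theorem integral_one_sub_exp_neg_mul_rpow (hs0 : 0 < s) (hs1 : s < 1) :
    ∫ w in Ioi 0, (1 - exp (-w)) * w ^ (-s - 1) = Gamma (1 - s) / s := by
  have hu : ∀ w ∈ Ioi (0 : ℝ), HasDerivAt (fun w => 1 - exp (-w)) (exp (-w)) w := fun w _ => by
    simpa using ((hasDerivAt_neg w).exp).const_sub 1
  have hv : ∀ w ∈ Ioi (0 : ℝ), HasDerivAt (fun w => -w ^ (-s)) (s * w ^ (-s - 1)) w :=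
    fun w hw => (hasDerivAt_rpow_const (p := -s) (Or.inl hw.ne')).neg.congr_deriv (by ring)
  have huv' : IntegrableOn (fun w => (1 - exp (-w)) * (s * w ^ (-s - 1))) (Ioi 0) :=
    IntegrableOn.congr_fun ((integrableOn_one_sub_exp_neg_mul_rpow hs0 hs1).const_mul s)
      (fun w _ => by ring) measurableSet_Ioi
  have hu'v : IntegrableOn (fun w => exp (-w) * -w ^ (-s)) (Ioi 0) := by
    simpa [sub_sub_cancel_left] using (GammaIntegral_convergent (by linarith : 0 < 1 - s)).neg
  have h_zero : Tendsto (fun w => (1 - exp (-w)) * -w ^ (-s)) (𝓝[>] 0) (𝓝 0) := by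
    have : Tendsto (fun w : ℝ => w ^ (1 - s)) (𝓝[>] 0) (𝓝 0) := by
      simpa [zero_rpow (by linarith : 1 - s ≠ 0)] using
        ((continuous_rpow_const (by linarith : 0 ≤ 1 - s)).tendsto 0).mono_left nhdsWithin_le_nhds
    refine squeeze_zero_norm' (eventually_nhdsWithin_of_forall fun w (hw : 0 < w) => ?_) this
    rw [norm_mul, norm_neg, norm_of_nonneg (one_sub_exp_neg_nonneg hw.le),
      norm_of_nonneg (by positivity), show 1 - s = 1 + -s by ring, rpow_add hw, rpow_one]
    exact mul_le_mul_of_nonneg_right (one_sub_exp_neg_le_self w) (by positivity)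
  have h_infty : Tendsto (fun w => (1 - exp (-w)) * -w ^ (-s)) atTop (𝓝 0) := by
    refine squeeze_zero_norm' ?_ (tendsto_rpow_neg_atTop hs0)
    filter_upwards [eventually_gt_atTop 0] with w hw
    rw [norm_mul, norm_neg, norm_of_nonneg (one_sub_exp_neg_nonneg hw.le),
      norm_of_nonneg (by positivity)]
    exact mul_le_of_le_one_left (by positivity) (one_sub_exp_neg_le_one w)
  have hibp := integral_Ioi_mul_deriv_eq_deriv_mul hu hv huv' hu'v h_zero h_infty
  rw [eq_div_iff hs0.ne', ← integral_mul_const]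
  calc ∫ w in Ioi 0, (1 - exp (-w)) * w ^ (-s - 1) * s
      = ∫ w in Ioi 0, (1 - exp (-w)) * (s * w ^ (-s - 1)) := by congr with w; ring
    _ = ∫ w in Ioi 0, exp (-w) * w ^ (1 - s - 1) := by simp [hibp, integral_neg]
    _ = Gamma (1 - s) := (Gamma_eq_integral (by linarith)).symm

theorem integral_one_sub_exp_neg_mul_mul_rpow (hs0 : 0 < s) (hs1 : s < 1) {θ : ℝ} (hθ : 0 < θ) :
    ∫ w in Ioi 0, (1 - exp (-(θ * w))) * w ^ (-s - 1) = θ ^ s * Gamma (1 - s) / s := by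
  have hscale := integral_comp_mul_left_Ioi (fun w => (1 - exp (-w)) * w ^ (-s - 1)) 0 hθ
  rw [mul_zero, integral_one_sub_exp_neg_mul_rpow hs0 hs1, smul_eq_mul] at hscale
  calc ∫ w in Ioi 0, (1 - exp (-(θ * w))) * w ^ (-s - 1)
      = θ ^ (s + 1) * ∫ w in Ioi 0, (1 - exp (-(θ * w))) * (θ * w) ^ (-s - 1) := by
        rw [← integral_const_mul]
        refine setIntegral_congr_fun measurableSet_Ioi fun w (hw : 0 < w) => ?_
        rw [mul_rpow hθ.le hw.le, show -s - 1 = -(s + 1) by ring, rpow_neg hθ.le]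
        field_simp
    _ = θ ^ s * Gamma (1 - s) / s := by
        rw [hscale, rpow_add_one hθ.ne']
        field_simp

end

theorem integral_two_pi_mul_one_sub_exp_neg_mul_rpow_neg {α θ : ℝ} (hα : 2 < α) (hθ : 0 < θ) :
    ∫ r in Ioi 0, 2 * π * r * (1 - exp (-(θ * r ^ (-α)))) =
      π * Gamma (1 - 2 / α) * θ ^ (2 / α) := by
  have hα0 : 0 < α := by linarith
  have hsubst := integral_comp_rpow_Ioi
    (fun w => 2 * π / α * ((1 - exp (-(θ * w))) * w ^ (-(2 / α) - 1))) (neg_ne_zero.2 hα0.ne')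
  rw [integral_const_mul, integral_one_sub_exp_neg_mul_mul_rpow (by positivity)
    ((div_lt_one hα0).2 hα) hθ] at hsubst
  calc ∫ r in Ioi 0, 2 * π * r * (1 - exp (-(θ * r ^ (-α))))
      = ∫ r in Ioi 0, (|-α| * r ^ (-α - 1)) • (2 * π / α *
          ((1 - exp (-(θ * r ^ (-α)))) * (r ^ (-α)) ^ (-(2 / α) - 1))) := by
        refine setIntegral_congr_fun measurableSet_Ioi fun r (hr : 0 < r) => ?_
        have hpow : r ^ (-α - 1) * (r ^ (-α)) ^ (-(2 / α) - 1) = r := by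
          rw [← rpow_mul hr.le, ← rpow_add hr]
          conv_rhs => rw [← rpow_one r]
          congr 1
          field_simp
          ring
        rw [smul_eq_mul, abs_neg, abs_of_pos hα0, mul_mul_mul_comm, ← mul_assoc,
          mul_div_cancel₀ _ hα0.ne']
        linear_combination (-(2 * π * (1 - exp (-(θ * r ^ (-α)))))) * hpow
    _ = π * Gamma (1 - 2 / α) * θ ^ (2 / α) := by
        rw [hsubst]
        field_simp

/-- For `α > 2` and `θ > 0`, `∫₀^∞ 2πr (1 - exp (-θ r^{-α})) dr = π Γ(1 - 2/α) θ^(2/α)`.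
Consequently, in a two-dimensional Poisson network where only the desired link fades,
`p_s^{1/0} = exp (-p π Γ(1-2/α) θ^(2/α))`, and the spatial contention `π Γ(1-2/α) θ^(2/α)`
exceeds that `θ^(2/α) (2π²/α) csc (2π/α)` of the fully Rayleigh-fading case. -/
theorem twoD_poisson_partial_fading (α θ : ℝ) (hα : 2 < α) (hθ : 0 < θ) :
    (∫ r in Ioi (0 : ℝ), 2 * π * r * (1 - Real.exp (-(θ * r ^ (-α))))) =
      π * Real.Gamma (1 - 2 / α) * θ ^ (2 / α) ∧
    (∀ p : ℝ, Real.exp (-(p * ∫ r in Ioi (0 : ℝ),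
        2 * π * r * (1 - Real.exp (-(θ * r ^ (-α)))))) =
      Real.exp (-(p * π * Real.Gamma (1 - 2 / α) * θ ^ (2 / α)))) ∧
    θ ^ (2 / α) * (2 * π ^ 2 / α) * (Real.sin (2 * π / α))⁻¹ <
      π * Real.Gamma (1 - 2 / α) * θ ^ (2 / α) := by
  have hα0 : 0 < α := by linarith
  have hcontention := integral_two_pi_mul_one_sub_exp_neg_mul_rpow_neg hα hθ
  refine ⟨hcontention, fun p => by rw [hcontention, mul_assoc, mul_assoc, mul_assoc], ?_⟩
  have hrayleigh := pi_mul_div_sin_lt_Gamma_one_sub (by positivity : 0 < 2 / α)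
    ((div_lt_one hα0).2 hα)
  calc θ ^ (2 / α) * (2 * π ^ 2 / α) * (sin (2 * π / α))⁻¹
      = π * (π * (2 / α) / sin (π * (2 / α))) * θ ^ (2 / α) := by
        rw [show 2 * π / α = π * (2 / α) by ring]
        ring
    _ < π * Gamma (1 - 2 / α) * θ ^ (2 / α) := by gcongr
end

section
/- For all δ > 0 and θ > 0, the improper Riemann integral ∫₀^∞ 2πr/(1 + exp(δr)/θ) dr equals (2π/δ²) · ∫₁^{θ+1} (log t)/(t−1) dt, i.e., it equals −(2π/δ²)·dilog(θ+1) where dilog(x) = ∫₁^x (log t)/(1−t) dt. -/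
/-!
Substituting `u = δ r` scales the integral by `δ⁻²`. Since `(1 + eᵘ/θ)⁻¹` is the derivative of
`-log (1 + θ e⁻ᵘ)`, integration by parts turns `∫₀^∞ u (1 + eᵘ/θ)⁻¹ du` into
`∫₀^∞ log (1 + θ e⁻ᵘ) du`, and the substitution `s = θ e⁻ᵘ` turns this into
`∫₀^θ log (1 + s) / s ds = ∫₁^{θ+1} log t / (t - 1) dt`.
-/

open MeasureTheory Set Real Filter Topology

section

variable {E : Type*} [NormedAddCommGroup E] [NormedSpace ℝ E]

theorem integral_Ioi_smul_comp_mul_left (f : ℝ → E) {δ : ℝ} (hδ : 0 < δ) :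
    ∫ r in Ioi (0 : ℝ), r • f (δ * r) = (δ ^ 2)⁻¹ • ∫ u in Ioi (0 : ℝ), u • f u := by
  have h := integral_comp_mul_left_Ioi (fun u => u • f u) 0 hδ
  simp only [mul_zero, mul_smul, integral_smul] at h
  rw [pow_two, mul_inv, mul_smul, ← h, inv_smul_smul₀ hδ.ne']

theorem image_mul_exp_neg_Ioi {θ : ℝ} (hθ : 0 < θ) :
    (fun u => θ * exp (-u)) '' Ioi 0 = Ioo 0 θ := by
  change ((θ * ·) ∘ exp ∘ Neg.neg) '' Ioi 0 = Ioo 0 θ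
  rw [image_comp, image_comp, image_neg_Ioi, neg_zero, image_exp_Iio, exp_zero,
    image_mul_left_Ioo hθ, mul_zero, mul_one]

theorem integral_Ioi_comp_mul_exp_neg (f : ℝ → E) {θ : ℝ} (hθ : 0 < θ) :
    ∫ u in Ioi (0 : ℝ), f (θ * exp (-u)) = ∫ s in Ioo 0 θ, s⁻¹ • f s := by
  have hderiv (u : ℝ) : HasDerivAt (fun u => θ * exp (-u)) (-(θ * exp (-u))) u := by
    simpa using ((hasDerivAt_neg u).exp).const_mul θ
  have hinj : InjOn (fun u => θ * exp (-u)) (Ioi 0) := fun a _ b _ hab =>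
    neg_injective (exp_injective (mul_left_cancel₀ hθ.ne' hab))
  rw [← image_mul_exp_neg_Ioi hθ, integral_image_eq_integral_abs_deriv_smul measurableSet_Ioi
    (fun u _ => (hderiv u).hasDerivWithinAt) hinj]
  refine setIntegral_congr_fun measurableSet_Ioi fun u _ => ?_
  have hpos : 0 < θ * exp (-u) := by positivity
  rw [abs_neg, abs_of_pos hpos, smul_smul, mul_inv_cancel₀ hpos.ne', one_smul]

end

theorem hasDerivAt_log_one_add_mul_exp_neg {θ : ℝ} (hθ : 0 < θ) (u : ℝ) :
    HasDerivAt (fun u => log (1 + θ * exp (-u))) (-(1 + exp u / θ)⁻¹) u := by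
  have hpos : 0 < 1 + θ * exp (-u) := by positivity
  convert (((hasDerivAt_neg u).exp.const_mul θ).const_add 1).log hpos.ne' using 1
  rw [exp_neg]
  field_simp
  ring

theorem log_one_add_mul_exp_neg_le {θ : ℝ} (hθ : 0 ≤ θ) (u : ℝ) :
    log (1 + θ * exp (-u)) ≤ θ * exp (-u) := by
  linarith [log_le_sub_one_of_pos (by positivity : 0 < 1 + θ * exp (-u))]

theorem inv_one_add_exp_div_le {θ : ℝ} (hθ : 0 < θ) (u : ℝ) :
    (1 + exp u / θ)⁻¹ ≤ θ * exp (-u) := by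
  calc (1 + exp u / θ)⁻¹ ≤ (exp u / θ)⁻¹ :=
        inv_anti₀ (by positivity) (le_add_of_nonneg_left zero_le_one)
    _ = θ * exp (-u) := by rw [inv_div, exp_neg, div_eq_mul_inv]

theorem integrableOn_Ioi_log_one_add_mul_exp_neg {θ : ℝ} (hθ : 0 < θ) :
    IntegrableOn (fun u => log (1 + θ * exp (-u))) (Ioi 0) := by
  refine ((integrableOn_exp_neg_Ioi 0).const_mul θ).mono'
    (Continuous.log (by fun_prop) fun u => by positivity).aestronglyMeasurable
    (Eventually.of_forall fun u => ?_)
  rw [norm_of_nonneg (log_nonneg (le_add_of_nonneg_right (by positivity)))]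
  exact log_one_add_mul_exp_neg_le hθ.le u

theorem integrableOn_Ioi_mul_inv_one_add_exp_div {θ : ℝ} (hθ : 0 < θ) :
    IntegrableOn (fun u => u * (1 + exp u / θ)⁻¹) (Ioi 0) := by
  have hdom : IntegrableOn (fun u => θ * (exp (-u) * u)) (Ioi 0) := by
    have h := (GammaIntegral_convergent two_pos).const_mul θ
    norm_num at h
    exact h
  refine hdom.mono' (by fun_prop (disch := positivity)) ?_
  filter_upwards [self_mem_ae_restrict measurableSet_Ioi] with u (hu : 0 < u)
  rw [norm_of_nonneg (by positivity)]
  nlinarith [inv_one_add_exp_div_le hθ u]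

theorem tendsto_mul_log_one_add_mul_exp_neg_atTop {θ : ℝ} (hθ : 0 < θ) :
    Tendsto (fun u => u * log (1 + θ * exp (-u))) atTop (𝓝 0) := by
  have hdom : Tendsto (fun u : ℝ => θ * (u ^ 1 * exp (-u))) atTop (𝓝 0) := by
    simpa using (tendsto_pow_mul_exp_neg_atTop_nhds_zero 1).const_mul θ
  refine squeeze_zero' ?_ ?_ hdom
  all_goals filter_upwards [eventually_ge_atTop 0] with u hu
  · exact mul_nonneg hu (log_nonneg (le_add_of_nonneg_right (by positivity)))
  · nlinarith [log_one_add_mul_exp_neg_le hθ.le u]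

theorem integral_Ioi_mul_inv_one_add_exp_div_eq_integral_log {θ : ℝ} (hθ : 0 < θ) :
    ∫ u in Ioi (0 : ℝ), u * (1 + exp u / θ)⁻¹ = ∫ u in Ioi (0 : ℝ), log (1 + θ * exp (-u)) := by
  have h_zero : Tendsto (fun u => u * -log (1 + θ * exp (-u))) (𝓝[>] 0) (𝓝 0) := by
    have : ContinuousAt (fun u => u * -log (1 + θ * exp (-u))) 0 := by
      fun_prop (disch := positivity)
    simpa using this.tendsto.mono_left nhdsWithin_le_nhds
  have h := integral_Ioi_mul_deriv_eq_deriv_mul (a' := 0) (b' := 0)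
    (fun u _ => hasDerivAt_id u)
    (fun u _ => (hasDerivAt_log_one_add_mul_exp_neg hθ u).neg)
    (by simpa [Pi.mul_def] using integrableOn_Ioi_mul_inv_one_add_exp_div hθ)
    (by simpa [Pi.mul_def] using (integrableOn_Ioi_log_one_add_mul_exp_neg hθ).neg)
    h_zero
    (by simpa [Pi.mul_def, Pi.neg_def] using (tendsto_mul_log_one_add_mul_exp_neg_atTop hθ).neg)
  simpa [integral_neg] using h

theorem integral_Ioi_mul_inv_one_add_exp_div {θ : ℝ} (hθ : 0 < θ) :
    ∫ u in Ioi (0 : ℝ), u * (1 + exp u / θ)⁻¹ = ∫ t in (1 : ℝ)..(θ + 1), log t / (t - 1) := by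
  have hshift := intervalIntegral.integral_comp_add_right (fun t => log t / (t - 1))
    (a := 0) (b := θ) 1
  rw [zero_add] at hshift
  rw [integral_Ioi_mul_inv_one_add_exp_div_eq_integral_log hθ,
    integral_Ioi_comp_mul_exp_neg (fun s => log (1 + s)) hθ, ← hshift,
    intervalIntegral.integral_of_le hθ.le, integral_Ioc_eq_integral_Ioo]
  refine setIntegral_congr_fun measurableSet_Ioo fun s _ => ?_
  simp [add_comm, div_eq_inv_mul]

/-- For `δ > 0` and `θ > 0`,
`∫₀^∞ 2πr/(1 + exp (δ r)/θ) dr = (2π/δ²) ∫₁^{θ+1} (log t)/(t-1) dt`, i.e. it equals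
`-(2π/δ²) · dilog (θ+1)` where `dilog x = ∫₁^x (log t)/(1-t) dt`. -/
theorem exponential_path_loss_spatial_contention (δ θ : ℝ) (hδ : 0 < δ) (hθ : 0 < θ) :
    (∫ r in Ioi (0 : ℝ), 2 * π * r / (1 + Real.exp (δ * r) / θ)) =
      (2 * π / δ ^ 2) * ∫ t in (1 : ℝ)..(θ + 1), Real.log t / (t - 1) ∧
    (∫ r in Ioi (0 : ℝ), 2 * π * r / (1 + Real.exp (δ * r) / θ)) =
      -((2 * π / δ ^ 2) * ∫ t in (1 : ℝ)..(θ + 1), Real.log t / (1 - t)) := by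
  have hscale := integral_Ioi_smul_comp_mul_left (fun u => (1 + exp u / θ)⁻¹) hδ
  simp only [smul_eq_mul] at hscale
  have hcontention : ∫ r in Ioi (0 : ℝ), 2 * π * r / (1 + exp (δ * r) / θ) =
      (2 * π / δ ^ 2) * ∫ t in (1 : ℝ)..(θ + 1), log t / (t - 1) :=
    calc ∫ r in Ioi (0 : ℝ), 2 * π * r / (1 + exp (δ * r) / θ)
        _ = 2 * π * ∫ r in Ioi (0 : ℝ), r * (1 + exp (δ * r) / θ)⁻¹ := by
          rw [← integral_const_mul]
          simp only [div_eq_mul_inv, mul_assoc]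
        _ = 2 * π * ((δ ^ 2)⁻¹ * ∫ u in Ioi (0 : ℝ), u * (1 + exp u / θ)⁻¹) := by rw [hscale]
        _ = _ := by rw [integral_Ioi_mul_inv_one_add_exp_div hθ]; ring
  refine ⟨hcontention, ?_⟩
  have hflip (t : ℝ) : log t / (1 - t) = -(log t / (t - 1)) := by rw [← neg_sub, div_neg]
  simp_rw [hcontention, hflip, intervalIntegral.integral_neg, mul_neg, neg_neg]
end

section
/- Let θ > 0, p ∈ [0,1), and set y = π θ^{1/4}/√2. Then the infinite product ∏_{i=1}^∞ (1 − p/(1 + i⁴/θ)) converges and equals [cosh²(y(1−p)^{1/4}) − cos²(y(1−p)^{1/4})] / [√(1−p) · (cosh² y − cos² y)]. That is, for one-sided infinite regular line networks with slotted ALOHA and α = 4, the success probability p_s has this closed form. -/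
/-!
Write `θ = 4c⁴` and `θ(1 - p) = 4(cq)⁴` with `q = (1 - p)^{1/4}`. Each factor is the quotient
`(1 + 4(cq)⁴/n⁴) / (1 + 4c⁴/n⁴)`, so it suffices to evaluate `∏ₙ (1 + 4c⁴/n⁴)`.
Since `1 + 4c⁴/n⁴ = |1 - z²/n²|²` for `z = c(1 + i)`, Euler's sine product gives
`∏ₙ (1 + 4c⁴/n⁴) = |sin(πz)/(πz)|² = (cosh²(πc) - cos²(πc)) / (2π²c²)`.
-/

open Real

lemma Complex.hasProd_euler_sin {z : ℂ} (hz : z ≠ 0) :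
    HasProd (fun n : ℕ => 1 - z ^ 2 / ((n : ℂ) + 1) ^ 2) (Complex.sin (π * z) / (π * z)) := by
  have := (multipliable_sineTerm z).hasProd_iff_tendsto_nat.mpr (tendsto_euler_sin_prod' hz)
  simpa [sineTerm, neg_div, ← sub_eq_add_neg] using this

lemma Complex.normSq_sin_add_mul_I_self (x : ℝ) :
    Complex.normSq (Complex.sin (x + x * Complex.I)) = Real.cosh x ^ 2 - Real.cos x ^ 2 := by
  rw [Complex.sin_add_mul_I, ← Complex.ofReal_sin, ← Complex.ofReal_cos,
    ← Complex.ofReal_cosh, ← Complex.ofReal_sinh, ← Complex.ofReal_mul, ← Complex.ofReal_mul,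
    Complex.normSq_add_mul_I]
  nlinarith [Real.sin_sq_add_cos_sq x, Real.cosh_sq_sub_sinh_sq x]

lemma cos_sq_lt_cosh_sq {x : ℝ} (hx : x ≠ 0) : cos x ^ 2 < cosh x ^ 2 := by
  nlinarith [cos_sq_le_one x, one_lt_cosh.mpr hx]

lemma hasProd_one_add_four_mul_pow_four_div {c : ℝ} (hc : c ≠ 0) :
    HasProd (fun n : ℕ => 1 + 4 * c ^ 4 / ((n : ℝ) + 1) ^ 4)
      ((cosh (π * c) ^ 2 - cos (π * c) ^ 2) / (2 * π ^ 2 * c ^ 2)) := by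
  have hz : (c * (1 + Complex.I) : ℂ) ≠ 0 :=
    mul_ne_zero (by exact_mod_cast hc) (by simp [Complex.ext_iff])
  convert (Complex.hasProd_euler_sin hz).map Complex.normSq Complex.continuous_normSq using 1
  · ext n
    have hfactor : 1 - (c * (1 + Complex.I)) ^ 2 / ((n : ℂ) + 1) ^ 2
        = ((1 : ℝ) : ℂ) + ((-(2 * c ^ 2 / ((n : ℝ) + 1) ^ 2)) : ℝ) * Complex.I := by
      push_cast
      field_simp
      linear_combination (-(c : ℂ) ^ 2) * Complex.I_sq
    rw [Function.comp_apply, hfactor, Complex.normSq_add_mul_I]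
    field_simp
    ring
  · have hπz : (π * (c * (1 + Complex.I)) : ℂ)
        = ((π * c : ℝ) : ℂ) + ((π * c : ℝ) : ℂ) * Complex.I := by
      push_cast
      ring
    rw [map_div₀, hπz, Complex.normSq_sin_add_mul_I_self, Complex.normSq_add_mul_I]
    ring

lemma one_sub_div_one_add_div_eq {θ x : ℝ} (p : ℝ) (hθ : 0 < θ) (hx : 0 < x) :
    1 - p / (1 + x / θ) = (1 + θ * (1 - p) / x) / (1 + θ / x) := by
  field_simp
  ring

lemma Real.rpow_one_div_four_pow_four {x : ℝ} (hx : 0 ≤ x) : (x ^ ((1 : ℝ) / 4)) ^ 4 = x := by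
  rw [one_div]
  exact_mod_cast rpow_inv_natCast_pow hx four_ne_zero

theorem regular_line_network_alpha4_success_probability_general (θ p : ℝ) (hθ : 0 < θ)
    (hp1 : p < 1) :
    HasProd (fun i : ℕ => 1 - p / (1 + ((i : ℝ) + 1) ^ 4 / θ))
      ((Real.cosh (π * θ ^ ((1 : ℝ) / 4) / Real.sqrt 2 * (1 - p) ^ ((1 : ℝ) / 4)) ^ 2 -
          Real.cos (π * θ ^ ((1 : ℝ) / 4) / Real.sqrt 2 * (1 - p) ^ ((1 : ℝ) / 4)) ^ 2) /
        (Real.sqrt (1 - p) *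
          (Real.cosh (π * θ ^ ((1 : ℝ) / 4) / Real.sqrt 2) ^ 2 -
            Real.cos (π * θ ^ ((1 : ℝ) / 4) / Real.sqrt 2) ^ 2))) := by
  have hp : 0 < 1 - p := by linarith
  set c := θ ^ ((1 : ℝ) / 4) / √2 with hc_def
  set q := (1 - p) ^ ((1 : ℝ) / 4)
  have hc : 0 < c := by positivity
  have hq : 0 < q := by positivity
  have hc4 : 4 * c ^ 4 = θ := by
    rw [hc_def, div_pow, rpow_one_div_four_pow_four hθ.le,
      show √2 ^ 4 = (√2 ^ 2) ^ 2 by ring, sq_sqrt zero_le_two]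
    ring
  have hq4 : q ^ 4 = 1 - p := rpow_one_div_four_pow_four hp.le
  have hq2 : q ^ 2 = √(1 - p) := by
    rw [← hq4, show q ^ 4 = (q ^ 2) ^ 2 by ring, sqrt_sq (by positivity)]
  have hterm (i : ℕ) : 1 - p / (1 + ((i : ℝ) + 1) ^ 4 / θ)
      = (1 + 4 * (c * q) ^ 4 / ((i : ℝ) + 1) ^ 4) / (1 + 4 * c ^ 4 / ((i : ℝ) + 1) ^ 4) := by
    rw [one_sub_div_one_add_div_eq p hθ (by positivity), ← hc4, ← hq4]
    ring
  have hscale (x y : ℝ) :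
      x / (q ^ 2 * y) = x / (2 * π ^ 2 * (c * q) ^ 2) / (y / (2 * π ^ 2 * c ^ 2)) := by
    field_simp
  have hden : cosh (π * c) ^ 2 - cos (π * c) ^ 2 ≠ 0 :=
    (sub_pos.mpr (cos_sq_lt_cosh_sq (by positivity))).ne'
  rw [mul_div_assoc, mul_assoc, ← hq2, hscale]
  exact ((hasProd_one_add_four_mul_pow_four_div (mul_pos hc hq).ne').div₀
    (hasProd_one_add_four_mul_pow_four_div hc.ne')
    (div_ne_zero hden (by positivity))).congr_fun hterm

/-- For `θ > 0`, `p ∈ [0,1)` and `y = π θ^{1/4}/√2`, the success probability of a one-sided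
infinite regular line network with slotted ALOHA and `α = 4` is
`p_s = ∏_{i=1}^∞ (1 - p/(1 + i⁴/θ))
     = (cosh² (y(1-p)^{1/4}) - cos² (y(1-p)^{1/4})) / (√(1-p) (cosh² y - cos² y))`. -/
theorem regular_line_network_alpha4_success_probability (θ p : ℝ) (hθ : 0 < θ)
    (hp0 : 0 ≤ p) (hp1 : p < 1) :
    HasProd (fun i : ℕ => 1 - p / (1 + ((i : ℝ) + 1) ^ 4 / θ))
      ((Real.cosh (π * θ ^ ((1 : ℝ) / 4) / Real.sqrt 2 * (1 - p) ^ ((1 : ℝ) / 4)) ^ 2 -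
          Real.cos (π * θ ^ ((1 : ℝ) / 4) / Real.sqrt 2 * (1 - p) ^ ((1 : ℝ) / 4)) ^ 2) /
        (Real.sqrt (1 - p) *
          (Real.cosh (π * θ ^ ((1 : ℝ) / 4) / Real.sqrt 2) ^ 2 -
            Real.cos (π * θ ^ ((1 : ℝ) / 4) / Real.sqrt 2) ^ 2))) :=
  regular_line_network_alpha4_success_probability_general θ p hθ hp1
end

section
/- Let θ > 0 and m > 0, and set y = π√θ/m. Then the infinite product ∏_{i=1}^∞ (1 + θ/(m²i²)) converges and its reciprocal equals y/sinh(y). That is, the success probability of a one-sided infinite regular line network with Rayleigh fading, m-phase TDMA and path loss exponent α = 2 is p_s = y/sinh(y). -/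
/-!
Substituting `x = i t` into Euler's product `sin (π x) / (π x) = ∏ (1 - x² / n²)` turns it into
`sinh (π t) / (π t) = ∏ (1 + t² / n²)`; with `t = √θ / m` the factors are exactly `1 + θ / (m² n²)`.
-/

open Real Filter Topology

theorem tendsto_prod_one_add_sq_div_sq {t : ℝ} (ht : t ≠ 0) :
    Tendsto (fun n : ℕ => ∏ i ∈ Finset.range n, (1 + t ^ 2 / ((i : ℝ) + 1) ^ 2)) atTop
      (𝓝 (sinh (π * t) / (π * t))) := by
  have euler := tendsto_euler_sin_prod' (x := t * Complex.I) (by simp [ht])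
  have hfactor (i : ℕ) :
      1 + sineTerm (t * Complex.I) i = ((1 + t ^ 2 / ((i : ℝ) + 1) ^ 2 : ℝ) : ℂ) := by
    simp only [sineTerm, mul_pow, Complex.I_sq]
    push_cast
    ring
  have hlimit : Complex.sin (π * (t * Complex.I)) / (π * (t * Complex.I)) =
      ((sinh (π * t) / (π * t) : ℝ) : ℂ) := by
    rw [← mul_assoc, Complex.sin_mul_I]
    push_cast
    field_simp [Complex.I_ne_zero]
  simp only [hfactor, hlimit, ← Complex.ofReal_prod] at euler
  exact tendsto_ofReal_iff.mp euler

theorem hasProd_one_add_sq_div_sq {t : ℝ} (ht : t ≠ 0) :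
    HasProd (fun i : ℕ => 1 + t ^ 2 / ((i : ℝ) + 1) ^ 2) (sinh (π * t) / (π * t)) := by
  have hmul : Multipliable fun i : ℕ => 1 + t ^ 2 / ((i : ℝ) + 1) ^ 2 :=
    Real.multipliable_one_add_of_summable <| by
      simpa only [Nat.cast_one] using (summable_pow_div_add (t ^ 2) 2 1 one_lt_two).of_norm
  exact hmul.hasProd_iff_tendsto_nat.mpr (tendsto_prod_one_add_sq_div_sq ht)

/-- For `θ > 0`, `m > 0` and `y = π√θ/m`, the product `∏_{i=1}^∞ (1 + θ/(m²i²))` converges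
and its reciprocal — the success probability of a one-sided infinite regular line network
with Rayleigh fading, `m`-phase TDMA and `α = 2` — equals `y/sinh y`. -/
theorem tdma_line_network_alpha2 (θ m : ℝ) (hθ : 0 < θ) (hm : 0 < m) :
    ∃ P : ℝ, HasProd (fun i : ℕ => 1 + θ / (m ^ 2 * ((i : ℝ) + 1) ^ 2)) P ∧
      P⁻¹ = (π * Real.sqrt θ / m) / Real.sinh (π * Real.sqrt θ / m) := by
  have ht : sqrt θ / m ≠ 0 := by positivity
  have hfactor (i : ℕ) :
      θ / (m ^ 2 * ((i : ℝ) + 1) ^ 2) = (sqrt θ / m) ^ 2 / ((i : ℝ) + 1) ^ 2 := by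
    rw [div_pow, sq_sqrt hθ.le, div_div]
  refine ⟨_, ?_, inv_div _ _⟩
  simpa only [hfactor, mul_div_assoc] using hasProd_one_add_sq_div_sq ht
end

section
/- Let θ > 0 and m > 0, and set y = π θ^{1/4}/(√2 · m). Then the infinite product ∏_{i=1}^∞ (1 + θ/(m⁴i⁴)) converges and its reciprocal equals 2y²/(cosh² y − cos² y). That is, the success probability of a one-sided infinite regular line network with Rayleigh fading, m-phase TDMA and path loss exponent α = 4 is p_s = 2y²/(cosh² y − cos² y). -/
/-!
Since `1 + t⁴/n⁴ = (1 - z²/n²)(1 - z̄²/n²)` for `z = t e^{iπ/4}`, the product is the product of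
Euler's sine products at `z` and `z̄`, namely `sin (πz) sin (πz̄) / (π² |z|²)`. With `πz = y + iy`
the numerator is `cosh² y - cos² y` and the denominator is `2y²`.
-/

open Real

namespace Complex

theorem hasProd_ofReal {ι : Type*} {f : ι → ℝ} {a : ℝ} :
    HasProd (fun i => (f i : ℂ)) a ↔ HasProd f a :=
  isUniformEmbedding_ofReal.isUniformInducing.isInducing.hasProd_iff (g := ofRealHom) f a

theorem hasProd_euler_sin_s12 {x : ℂ} (hx : x ≠ 0) :
    HasProd (fun n : ℕ => 1 - x ^ 2 / ((n : ℂ) + 1) ^ 2) (sin (π * x) / (π * x)) := by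
  have h := (multipliable_sineTerm x).hasProd_iff_tendsto_nat.mpr (tendsto_euler_sin_prod' hx)
  simpa only [sineTerm, neg_div, ← sub_eq_add_neg] using h

theorem sin_add_mul_I_mul_sin_sub_mul_I (a b : ℝ) :
    sin (a + b * I) * sin (a - b * I) = ((Real.cosh b ^ 2 - Real.cos a ^ 2 : ℝ) : ℂ) := by
  rw [sin_add, sin_sub, sin_mul_I, cos_mul_I]
  push_cast
  linear_combination (-cos a ^ 2 * sinh b ^ 2) * I_sq - cos a ^ 2 * cosh_sq_sub_sinh_sq (b : ℂ) +
    cosh b ^ 2 * sin_sq_add_cos_sq (a : ℂ)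

end Complex

theorem Real.hasProd_one_add_pow_four_div {t : ℝ} (ht : t ≠ 0) :
    HasProd (fun n : ℕ => 1 + t ^ 4 / ((n : ℝ) + 1) ^ 4)
      ((cosh (π * t / √2) ^ 2 - cos (π * t / √2) ^ 2) / (2 * (π * t / √2) ^ 2)) := by
  set y := π * t / √2 with hy
  have hsqrt : (√2 : ℂ) ^ 2 = 2 := by exact_mod_cast Real.sq_sqrt zero_le_two
  set z : ℂ := t / √2 * (1 + Complex.I)
  set w : ℂ := t / √2 * (1 - Complex.I)
  have hz : π * z = y + y * Complex.I := by simp only [z, hy]; push_cast; ring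
  have hw : π * w = y - y * Complex.I := by simp only [w, hy]; push_cast; ring
  have hz2 : z ^ 2 = t ^ 2 * Complex.I := by
    rw [mul_pow, div_pow, hsqrt]; linear_combination (t : ℂ) ^ 2 / 2 * Complex.I_sq
  have hw2 : w ^ 2 = -(t ^ 2 * Complex.I) := by
    rw [mul_pow, div_pow, hsqrt]; linear_combination (t : ℂ) ^ 2 / 2 * Complex.I_sq
  have hterm (n : ℕ) : (1 - z ^ 2 / ((n : ℂ) + 1) ^ 2) * (1 - w ^ 2 / ((n : ℂ) + 1) ^ 2) =
      ((1 + t ^ 4 / ((n : ℝ) + 1) ^ 4 : ℝ) : ℂ) := by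
    rw [hz2, hw2]
    push_cast
    generalize (n : ℂ) + 1 = k
    linear_combination (-(t : ℂ) ^ 4 / k ^ 4) * Complex.I_sq
  have hvalue : Complex.sin (π * z) / (π * z) * (Complex.sin (π * w) / (π * w)) =
      (((cosh y ^ 2 - cos y ^ 2) / (2 * y ^ 2) : ℝ) : ℂ) := by
    rw [div_mul_div_comm, hz, hw, Complex.sin_add_mul_I_mul_sin_sub_mul_I]
    push_cast
    congr 1
    linear_combination (-(y : ℂ) ^ 2) * Complex.I_sq
  have hz0 : z ≠ 0 := by simp [z, ht, Complex.ext_iff]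
  have hw0 : w ≠ 0 := by simp [w, ht, Complex.ext_iff]
  rw [← Complex.hasProd_ofReal, ← hvalue]
  simpa only [hterm] using (Complex.hasProd_euler_sin_s12 hz0).mul (Complex.hasProd_euler_sin_s12 hw0)

/-- For `θ > 0`, `m > 0` and `y = π θ^{1/4}/(√2 m)`, the product `∏_{i=1}^∞ (1 + θ/(m⁴i⁴))`
converges and its reciprocal — the success probability of a one-sided infinite regular line
network with Rayleigh fading, `m`-phase TDMA and `α = 4` — equals
`2y²/(cosh² y - cos² y)`. -/
theorem tdma_line_network_alpha4 (θ m : ℝ) (hθ : 0 < θ) (hm : 0 < m) :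
    ∃ P : ℝ, HasProd (fun i : ℕ => 1 + θ / (m ^ 4 * ((i : ℝ) + 1) ^ 4)) P ∧
      P⁻¹ = 2 * (π * θ ^ ((1 : ℝ) / 4) / (Real.sqrt 2 * m)) ^ 2 /
        (Real.cosh (π * θ ^ ((1 : ℝ) / 4) / (Real.sqrt 2 * m)) ^ 2 -
          Real.cos (π * θ ^ ((1 : ℝ) / 4) / (Real.sqrt 2 * m)) ^ 2) := by
  set t := θ ^ ((1 : ℝ) / 4) / m
  have ht : t ≠ 0 := by positivity
  have ht4 : t ^ 4 = θ / m ^ 4 := by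
    rw [div_pow, ← Real.rpow_natCast, ← Real.rpow_mul hθ.le]
    norm_num
  have hy : π * t / √2 = π * θ ^ ((1 : ℝ) / 4) / (√2 * m) := by ring
  have hprod := Real.hasProd_one_add_pow_four_div ht
  simp only [ht4, hy, div_div] at hprod
  exact ⟨_, hprod, inv_div _ _⟩
end

section
/- Let α > 1 be real and x ≥ 0, and let ζ denote the Riemann zeta function. Then exp(−ζ(α)x) ≤ ∏_{i=1}^∞ (1 + x/i^α)^{−1} ≤ (1 + ζ(α)x + (ζ(α)−1)x²)^{−1} ≤ (1 + ζ(α)x)^{−1}. In particular, with x = θ/m^α, the success probability of a one-sided infinite regular line network with Rayleigh fading and m-phase TDMA satisfies exp(−ζ(α)θ/m^α) ≤ p_s ≤ 1/(1 + ζ(α)θ/m^α + (ζ(α)−1)θ²/m^{2α}). -/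
open Real

/-- The Riemann zeta function for real argument `α > 1`, `ζ(α) = ∑_{i=1}^∞ i^{-α}`. -/
noncomputable def zetaReal (α : ℝ) : ℝ := ∑' i : ℕ, ((i : ℝ) + 1) ^ (-α)

/-!
Write `a i = x / (i + 1)^α`, so that `∑ a i = ζ(α) x` and `p = (∏ (1 + a i))⁻¹`.
Since `1 + t ≤ eᵗ`, the product is at most `exp (ζ(α) x)`. Splitting off the first factor
`1 + a 0 = 1 + x` and bounding the rest below by `1 + ∑_{i ≥ 1} a i = 1 + (ζ(α) - 1) x`
gives the product at least `(1 + x)(1 + (ζ(α) - 1) x) = 1 + ζ(α) x + (ζ(α) - 1) x²`.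
-/

theorem Finset.one_add_sum_le_prod_one_add {ι R : Type*} [CommSemiring R] [PartialOrder R]
    [IsOrderedRing R] (s : Finset ι) {f : ι → R} (hf : ∀ i, 0 ≤ f i) :
    1 + ∑ i ∈ s, f i ≤ ∏ i ∈ s, (1 + f i) := by
  classical
  induction s using Finset.cons_induction with
  | empty => simp
  | cons a s ha ih =>
    rw [Finset.sum_cons, Finset.prod_cons]
    have hsum : 0 ≤ ∑ i ∈ s, f i := Finset.sum_nonneg fun i _ => hf i
    calc 1 + (f a + ∑ i ∈ s, f i) ≤ 1 + (f a + ∑ i ∈ s, f i) + f a * ∑ i ∈ s, f i :=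
          le_add_of_nonneg_right (mul_nonneg (hf a) hsum)
      _ = (1 + f a) * (1 + ∑ i ∈ s, f i) := by ring
      _ ≤ (1 + f a) * ∏ i ∈ s, (1 + f i) :=
          mul_le_mul_of_nonneg_left ih (add_nonneg zero_le_one (hf a))

namespace Real

section TprodOneAdd

variable {ι : Type*} {f : ι → ℝ}

theorem one_add_tsum_le_tprod_one_add (hf : ∀ i, 0 ≤ f i) (hs : Summable f) :
    1 + ∑' i, f i ≤ ∏' i, (1 + f i) :=
  le_of_tendsto_of_tendsto' (hs.hasSum.const_add 1)
    (Real.multipliable_one_add_of_summable hs).hasProd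
    fun s => s.one_add_sum_le_prod_one_add hf

theorem tprod_one_add_le_exp_tsum (hf : ∀ i, 0 ≤ f i) (hs : Summable f) :
    ∏' i, (1 + f i) ≤ exp (∑' i, f i) :=
  le_of_tendsto_of_tendsto' (Real.multipliable_one_add_of_summable hs).hasProd
    ((continuous_exp.tendsto _).comp hs.hasSum)
    fun s => prod_one_add_le_exp_sum s hf

end TprodOneAdd

theorem one_add_mul_one_add_tsum_le_tprod_one_add {f : ℕ → ℝ} (hf : ∀ n, 0 ≤ f n)
    (hs : Summable f) :
    (1 + f 0) * (1 + ∑' n, f (n + 1)) ≤ ∏' n, (1 + f n) := by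
  have hs' : Summable fun n => f (n + 1) := (summable_nat_add_iff 1).2 hs
  rw [tprod_eq_zero_mul' (f := fun n => 1 + f n) (Real.multipliable_one_add_of_summable hs')]
  exact mul_le_mul_of_nonneg_left (one_add_tsum_le_tprod_one_add (fun n => hf _) hs')
    (add_nonneg zero_le_one (hf 0))

end Real

theorem summable_nat_add_one_rpow_neg {α : ℝ} (hα : 1 < α) :
    Summable fun i : ℕ => ((i : ℝ) + 1) ^ (-α) := by
  have h : Summable fun n : ℕ => (n : ℝ) ^ (-α) := Real.summable_nat_rpow.2 (by linarith)
  simpa using (summable_nat_add_iff 1).2 h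

theorem one_le_zetaReal {α : ℝ} (hα : 1 < α) : 1 ≤ zetaReal α := by
  simpa [zetaReal] using (summable_nat_add_one_rpow_neg hα).le_tsum 0 fun i _ => by positivity

/-- For real `α > 1` and `x ≥ 0`,
`exp (-ζ(α) x) ≤ ∏_{i=1}^∞ (1 + x/i^α)⁻¹ ≤ (1 + ζ(α)x + (ζ(α)-1)x²)⁻¹ ≤ (1 + ζ(α)x)⁻¹`.
With `x = θ/m^α` this bounds the success probability of a one-sided infinite regular line
network with Rayleigh fading and `m`-phase TDMA. -/
theorem tdma_success_probability_bounds (α x : ℝ) (hα : 1 < α) (hx : 0 ≤ x) :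
    ∃ P : ℝ, HasProd (fun i : ℕ => (1 + x / ((i : ℝ) + 1) ^ α)⁻¹) P ∧
      Real.exp (-(zetaReal α * x)) ≤ P ∧
      P ≤ (1 + zetaReal α * x + (zetaReal α - 1) * x ^ 2)⁻¹ ∧
      (1 + zetaReal α * x + (zetaReal α - 1) * x ^ 2)⁻¹ ≤ (1 + zetaReal α * x)⁻¹ := by
  set a : ℕ → ℝ := fun i => x * ((i : ℝ) + 1) ^ (-α) with ha
  have ha_nonneg : ∀ i, 0 ≤ a i := fun i => by positivity
  have ha_summable : Summable a := (summable_nat_add_one_rpow_neg hα).mul_left x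
  have hterm (i : ℕ) : 1 + x / ((i : ℝ) + 1) ^ α = 1 + a i := by
    simp only [ha]
    rw [rpow_neg (by positivity), div_eq_mul_inv]
  have hsum : ∑' i, a i = zetaReal α * x := by rw [ha, tsum_mul_left, zetaReal, mul_comm]
  have ha0 : a 0 = x := by simp [ha]
  have htail : ∑' i, a (i + 1) = zetaReal α * x - x := by
    rw [← hsum, ha_summable.tsum_eq_zero_add, ha0, add_sub_cancel_left]
  have hζ : 0 ≤ zetaReal α - 1 := sub_nonneg.2 (one_le_zetaReal hα)
  have hlower : 1 + zetaReal α * x + (zetaReal α - 1) * x ^ 2 ≤ ∏' i, (1 + a i) := by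
    have := Real.one_add_mul_one_add_tsum_le_tprod_one_add ha_nonneg ha_summable
    rw [ha0, htail] at this
    linear_combination this
  have hζx : 0 < 1 + zetaReal α * x := by linarith [mul_nonneg hζ hx]
  have hden : 0 < 1 + zetaReal α * x + (zetaReal α - 1) * x ^ 2 := by
    linarith [mul_nonneg hζ (sq_nonneg x)]
  have hprod : 0 < ∏' i, (1 + a i) := hden.trans_le hlower
  refine ⟨(∏' i, (1 + a i))⁻¹, ?_, ?_, inv_anti₀ hden hlower, inv_anti₀ hζx ?_⟩
  · simp_rw [hterm]
    exact (Real.multipliable_one_add_of_summable ha_summable).hasProd.inv₀ hprod.ne'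
  · rw [exp_neg, ← hsum]
    exact inv_anti₀ hprod (Real.tprod_one_add_le_exp_tsum ha_nonneg ha_summable)
  · exact le_add_of_nonneg_right (mul_nonneg hζ (sq_nonneg x))
end

section
/- Define E(x) = (2/√π) ∫₀^x exp(−u²) du (the error function). For every x > 0, the strict inequalities 1 − x < 1 − E(√π·x/2) < exp(−x) hold; equivalently, 1 − E(√π·x/2), viewed as a function of x ≥ 0, lies strictly between 1 − x and e^{−x} for x > 0. Consequently, the success probability p_s(p) = 1 − erf(π^{3/2} p √θ / 2) of a non-fading two-dimensional Poisson ALOHA network with α = 4 satisfies 1 − γp < p_s(p) < exp(−γp) with spatial contention γ = π√θ. -/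
open Real

/-- The error function `erf x = (2/√π) ∫₀^x exp (-u²) du`. -/
noncomputable def errorFun (x : ℝ) : ℝ :=
  (2 / Real.sqrt π) * ∫ u in (0 : ℝ)..x, Real.exp (-u ^ 2)

/-!
The lower bound is `exp (-u²) < 1` under the integral. For the upper bound put
`g x = exp (-x) - (1 - erf (√π x / 2))`. Then `g 0 = 0`, `g → 0` at infinity, and
`g' x = exp (-π x² / 4) - exp (-x)` is positive on `(0, 4/π)` and negative on `(4/π, ∞)`,
so `g` rises from `0` and then decreases strictly towards `0`: it is positive on `(0, ∞)`.
-/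

open Filter Set Topology

lemma pos_of_strictMonoOn_Icc_of_strictAntiOn_Ici {f : ℝ → ℝ} {c x : ℝ}
    (hmono : StrictMonoOn f (Icc 0 c)) (hanti : StrictAntiOn f (Ici c)) (h0 : f 0 = 0)
    (hlim : Tendsto f atTop (𝓝 0)) (hx : 0 < x) : 0 < f x := by
  rcases le_or_gt x c with hxc | hcx
  · simpa [h0] using hmono ⟨le_rfl, hx.le.trans hxc⟩ ⟨hx.le, hxc⟩ hx
  · have hstep : f (x + 1) < f x := hanti hcx.le (mem_Ici.mpr (by linarith)) (by linarith)
    have htail : 0 ≤ f (x + 1) := by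
      refine le_of_tendsto hlim ?_
      filter_upwards [eventually_ge_atTop (x + 1)] with y hy
      exact hanti.antitoneOn (mem_Ici.mpr (by linarith)) (mem_Ici.mpr (by linarith)) hy
    linarith

lemma continuous_exp_neg_sq : Continuous fun u : ℝ => exp (-u ^ 2) := by
  fun_prop

lemma errorFun_zero : errorFun 0 = 0 := by
  simp [errorFun]

lemma hasDerivAt_errorFun (x : ℝ) :
    HasDerivAt errorFun (2 / √π * exp (-x ^ 2)) x :=
  ((continuous_exp_neg_sq.integral_hasStrictDerivAt 0 x).hasDerivAt).const_mul (2 / √π)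

lemma errorFun_lt_of_pos {t : ℝ} (ht : 0 < t) : errorFun t < 2 / √π * t := by
  have hint : ∫ u in (0 : ℝ)..t, exp (-u ^ 2) < ∫ _ in (0 : ℝ)..t, (1 : ℝ) := by
    refine intervalIntegral.integral_lt_integral_of_continuousOn_of_le_of_exists_lt ht
      continuous_exp_neg_sq.continuousOn continuousOn_const (fun u _ => ?_)
      ⟨t, right_mem_Icc.mpr ht.le, ?_⟩
    · simpa using sq_nonneg u
    · simpa using pow_pos ht 2
  rw [intervalIntegral.integral_const, smul_eq_mul, mul_one, sub_zero] at hint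
  exact mul_lt_mul_of_pos_left hint (by positivity)

lemma tendsto_errorFun_atTop : Tendsto errorFun atTop (𝓝 1) := by
  have hint : MeasureTheory.IntegrableOn (fun u : ℝ => exp (-u ^ 2)) (Ioi 0) := by
    simpa using (integrable_exp_neg_mul_sq one_pos).integrableOn
  have hgauss : ∫ u in Ioi (0 : ℝ), exp (-u ^ 2) = √π / 2 := by
    simpa using integral_gaussian_Ioi 1
  have h := (MeasureTheory.intervalIntegral_tendsto_integral_Ioi 0 hint tendsto_id).const_mul
    (2 / √π)
  rwa [hgauss, div_mul_div_cancel₀ (sqrt_pos.mpr pi_pos).ne', div_self two_ne_zero] at h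

lemma one_sub_lt_one_sub_errorFun {x : ℝ} (hx : 0 < x) :
    1 - x < 1 - errorFun (√π * x / 2) := by
  have h := errorFun_lt_of_pos (show 0 < √π * x / 2 by positivity)
  rw [show 2 / √π * (√π * x / 2) = x by field_simp] at h
  linarith

noncomputable def expSubErfc (x : ℝ) : ℝ :=
  exp (-x) - (1 - errorFun (√π * x / 2))

lemma expSubErfc_zero : expSubErfc 0 = 0 := by
  simp [expSubErfc, errorFun_zero]

lemma hasDerivAt_expSubErfc (x : ℝ) :
    HasDerivAt expSubErfc (exp (-(π * x ^ 2 / 4)) - exp (-x)) x := by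
  have hexp : HasDerivAt (fun x : ℝ => exp (-x)) (-exp (-x)) x := by
    simpa using (hasDerivAt_neg x).exp
  have hlin : HasDerivAt (fun x : ℝ => √π * x / 2) (√π / 2) x := by
    simpa using ((hasDerivAt_id x).const_mul √π).div_const 2
  have herf := (hasDerivAt_errorFun (√π * x / 2)).comp x hlin
  have hchain : 2 / √π * exp (-(√π * x / 2) ^ 2) * (√π / 2) = exp (-(π * x ^ 2 / 4)) := by
    have hsq : (√π * x / 2) ^ 2 = π * x ^ 2 / 4 := by
      rw [div_pow, mul_pow, sq_sqrt pi_pos.le]; norm_num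
    rw [hsq]
    field_simp [(sqrt_pos.mpr pi_pos).ne']
  exact (hexp.sub ((hasDerivAt_const x 1).sub herf)).congr_deriv (by rw [hchain]; ring)

lemma continuous_expSubErfc : Continuous expSubErfc :=
  continuous_iff_continuousAt.mpr fun x => (hasDerivAt_expSubErfc x).continuousAt

lemma tendsto_expSubErfc_atTop : Tendsto expSubErfc atTop (𝓝 0) := by
  have hlin : Tendsto (fun x : ℝ => √π * x / 2) atTop atTop :=
    (tendsto_id.const_mul_atTop (sqrt_pos.mpr pi_pos)).atTop_div_const two_pos
  have h := tendsto_exp_neg_atTop_nhds_zero.sub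
    ((tendsto_const_nhds (x := (1 : ℝ))).sub (tendsto_errorFun_atTop.comp hlin))
  rwa [sub_self, sub_zero] at h

lemma deriv_expSubErfc_pos {x : ℝ} (hx : x ∈ Ioo 0 (4 / π)) : 0 < deriv expSubErfc x := by
  rw [(hasDerivAt_expSubErfc x).deriv, sub_pos, exp_lt_exp, neg_lt_neg_iff]
  have := (lt_div_iff₀ pi_pos).mp hx.2
  nlinarith [hx.1]

lemma deriv_expSubErfc_neg {x : ℝ} (hx : 4 / π < x) : deriv expSubErfc x < 0 := by
  rw [(hasDerivAt_expSubErfc x).deriv, sub_neg, exp_lt_exp, neg_lt_neg_iff]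
  have hx0 : 0 < x := (by positivity : (0 : ℝ) < 4 / π).trans hx
  have := (div_lt_iff₀ pi_pos).mp hx
  nlinarith

lemma expSubErfc_pos {x : ℝ} (hx : 0 < x) : 0 < expSubErfc x := by
  refine pos_of_strictMonoOn_Icc_of_strictAntiOn_Ici (c := 4 / π) ?_ ?_ expSubErfc_zero
    tendsto_expSubErfc_atTop hx
  · refine strictMonoOn_of_deriv_pos (convex_Icc _ _) continuous_expSubErfc.continuousOn ?_
    intro y hy
    rw [interior_Icc] at hy
    exact deriv_expSubErfc_pos hy
  · refine strictAntiOn_of_deriv_neg (convex_Ici _) continuous_expSubErfc.continuousOn ?_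
    intro y hy
    rw [interior_Ici] at hy
    exact deriv_expSubErfc_neg hy

lemma one_sub_errorFun_lt_exp_neg {x : ℝ} (hx : 0 < x) :
    1 - errorFun (√π * x / 2) < exp (-x) :=
  sub_pos.mp (expSubErfc_pos hx)

lemma pi_rpow_three_halves : π ^ ((3 : ℝ) / 2) = π * √π := by
  rw [show (3 : ℝ) / 2 = 1 + 1 / 2 by norm_num, rpow_add pi_pos, rpow_one, ← sqrt_eq_rpow]

/-- For every `x > 0`, `1 - x < 1 - erf (√π x/2) < exp (-x)`. Consequently the success
probability `p_s(p) = 1 - erf (π^{3/2} p √θ/2)` of a non-fading two-dimensional Poisson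
ALOHA network with `α = 4` satisfies `1 - γ p < p_s(p) < exp (-γ p)` with spatial
contention `γ = π√θ`. -/
theorem erf_success_probability_bounds :
    (∀ x : ℝ, 0 < x →
      1 - x < 1 - errorFun (Real.sqrt π * x / 2) ∧
      1 - errorFun (Real.sqrt π * x / 2) < Real.exp (-x)) ∧
    (∀ θ p : ℝ, 0 < θ → 0 < p →
      1 - π * Real.sqrt θ * p < 1 - errorFun (π ^ ((3 : ℝ) / 2) * p * Real.sqrt θ / 2) ∧
      1 - errorFun (π ^ ((3 : ℝ) / 2) * p * Real.sqrt θ / 2) <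
        Real.exp (-(π * Real.sqrt θ * p))) := by
  have bounds : ∀ x : ℝ, 0 < x →
      1 - x < 1 - errorFun (√π * x / 2) ∧ 1 - errorFun (√π * x / 2) < exp (-x) :=
    fun x hx => ⟨one_sub_lt_one_sub_errorFun hx, one_sub_errorFun_lt_exp_neg hx⟩
  refine ⟨bounds, fun θ p hθ hp => ?_⟩
  have harg : π ^ ((3 : ℝ) / 2) * p * √θ / 2 = √π * (π * √θ * p) / 2 := by
    rw [pi_rpow_three_halves]; ring
  rw [harg]
  exact bounds _ (by positivity)
end

section
/- Let γ > 0. The function f(p) = p(1−p)·exp(−pγ) on the open interval (0,1) attains its maximum uniquely at p_opt = 1/γ + (1 − √(1 + 4/γ²))/2; this p_opt lies in (0, 1/2) and is the root in (0,1) of the quadratic equation p² − p(1 + 2/γ) + 1/γ = 0. Moreover, the maximum value satisfies f(p_opt) ≥ ((1+γ)/(2+γ)²)·exp(−γ/(2+γ)). -/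
/-!
The derivative of `p(1-p)e^{-pγ}` is `e^{-pγ}(γp² - (γ+2)p + 1)`, and the quadratic factor is
`γ(p - p₋)(p - p₊)` with roots `p₋ = p_opt ∈ (0, 1/2)` and `p₊ > 1` whose product is `1/γ`.
So the throughput increases strictly on `(0, p_opt]` and decreases strictly on `[p_opt, 1)`.
The lower bound is its value at `p = 1/(2+γ)`, the root of the quadratic factor once `γp²`
is dropped.
-/

open Real Set

noncomputable def optTransmitProb (γ : ℝ) : ℝ := 1 / γ + (1 - √(1 + 4 / γ ^ 2)) / 2

noncomputable def optTransmitProbConj (γ : ℝ) : ℝ := 1 / γ + (1 + √(1 + 4 / γ ^ 2)) / 2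

theorem lt_of_hasDerivAt_pos_of_neg {f f' : ℝ → ℝ} {a b c x : ℝ}
    (hf : ∀ y, HasDerivAt f (f' y) y) (hpos : ∀ y ∈ Ioo a c, 0 < f' y)
    (hneg : ∀ y ∈ Ioo c b, f' y < 0) (hax : a ≤ x) (hxb : x ≤ b) (hxc : x ≠ c) :
    f x < f c := by
  have hcont : Continuous f := continuous_iff_continuousAt.2 fun y ↦ (hf y).continuousAt
  rcases hxc.lt_or_gt with hlt | hgt
  · refine strictMonoOn_of_deriv_pos (convex_Icc x c) hcont.continuousOn (fun y hy ↦ ?_)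
      (left_mem_Icc.2 hlt.le) (right_mem_Icc.2 hlt.le) hlt
    rw [interior_Icc] at hy
    rw [(hf y).deriv]
    exact hpos y ⟨hax.trans_lt hy.1, hy.2⟩
  · refine strictAntiOn_of_deriv_neg (convex_Icc c x) hcont.continuousOn (fun y hy ↦ ?_)
      (left_mem_Icc.2 hgt.le) (right_mem_Icc.2 hgt.le) hgt
    rw [interior_Icc] at hy
    rw [(hf y).deriv]
    exact hneg y ⟨hy.1, hy.2.trans_le hxb⟩

theorem hasDerivAt_mul_one_sub_mul_exp (γ x : ℝ) :
    HasDerivAt (fun p ↦ p * (1 - p) * exp (-(p * γ)))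
      (exp (-(x * γ)) * (γ * x ^ 2 - (γ + 2) * x + 1)) x := by
  have h : HasDerivAt (fun p ↦ p * (1 - p) * exp (-(p * γ)))
      ((1 * (1 - x) + x * (0 - 1)) * exp (-(x * γ)) + x * (1 - x) * (exp (-(x * γ)) * -(1 * γ)))
      x :=
    ((hasDerivAt_id' x).mul ((hasDerivAt_const x 1).sub (hasDerivAt_id' x))).mul
      ((hasDerivAt_id' x).mul_const γ).neg.exp
  convert h using 1
  ring

section Roots

variable (γ : ℝ)

theorem sq_sqrt_one_add_four_div_sq : √(1 + 4 / γ ^ 2) ^ 2 = 1 + 4 / γ ^ 2 :=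
  sq_sqrt (by positivity)

theorem optTransmitProb_add_conj : optTransmitProb γ + optTransmitProbConj γ = 1 + 2 / γ := by
  unfold optTransmitProb optTransmitProbConj
  ring

theorem optTransmitProb_mul_conj : optTransmitProb γ * optTransmitProbConj γ = 1 / γ := by
  unfold optTransmitProb optTransmitProbConj
  linear_combination (-1 / 4 : ℝ) * sq_sqrt_one_add_four_div_sq γ

theorem optTransmitProb_quadratic :
    optTransmitProb γ ^ 2 - optTransmitProb γ * (1 + 2 / γ) + 1 / γ = 0 := by
  linear_combination optTransmitProb γ * optTransmitProb_add_conj γ - optTransmitProb_mul_conj γ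

theorem quadratic_eq_mul_sub_optTransmitProb {γ : ℝ} (hγ : γ ≠ 0) (x : ℝ) :
    γ * x ^ 2 - (γ + 2) * x + 1 =
      γ * ((x - optTransmitProb γ) * (x - optTransmitProbConj γ)) := by
  have hsum := congrArg (γ * ·) (optTransmitProb_add_conj γ)
  have hprod := congrArg (γ * ·) (optTransmitProb_mul_conj γ)
  field_simp at hsum hprod
  linear_combination x * hsum - hprod

theorem optTransmitProb_lt_half : optTransmitProb γ < 1 / 2 := by
  have hs := sq_sqrt_one_add_four_div_sq γ
  have hs0 := sqrt_nonneg (1 + 4 / γ ^ 2)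
  have h : (2 / γ) ^ 2 < √(1 + 4 / γ ^ 2) ^ 2 := by rw [hs, div_pow]; linarith
  have h2 : 2 / γ = 2 * (1 / γ) := by ring
  unfold optTransmitProb
  linarith [(abs_lt_of_sq_lt_sq' h hs0).2]

variable {γ}

theorem optTransmitProb_pos (hγ : 0 < γ) : 0 < optTransmitProb γ := by
  have h : √(1 + 4 / γ ^ 2) < 1 + 2 / γ := by
    rw [sqrt_lt' (by positivity)]
    have : 0 < 4 / γ := by positivity
    linarith [show (1 + 2 / γ) ^ 2 = 1 + 4 / γ ^ 2 + 4 / γ by ring]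
  have h2 : 2 / γ = 2 * (1 / γ) := by ring
  unfold optTransmitProb
  linarith

theorem one_lt_optTransmitProbConj (hγ : 0 < γ) : 1 < optTransmitProbConj γ := by
  have h : 1 ≤ √(1 + 4 / γ ^ 2) := one_le_sqrt.2 (by simp only [le_add_iff_nonneg_right]; positivity)
  have : 0 < 1 / γ := by positivity
  unfold optTransmitProbConj
  linarith

end Roots

theorem mul_one_sub_mul_exp_lt_optTransmitProb {γ p : ℝ} (hγ : 0 < γ) (hp0 : 0 < p)
    (hp1 : p < 1) (hp : p ≠ optTransmitProb γ) :
    p * (1 - p) * exp (-(p * γ)) <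
      optTransmitProb γ * (1 - optTransmitProb γ) * exp (-(optTransmitProb γ * γ)) := by
  have hconj := one_lt_optTransmitProbConj hγ
  refine lt_of_hasDerivAt_pos_of_neg (hasDerivAt_mul_one_sub_mul_exp γ) (a := 0) (b := 1)
    (fun y hy ↦ ?_) (fun y hy ↦ ?_) hp0.le hp1.le hp
  · rw [quadratic_eq_mul_sub_optTransmitProb hγ.ne']
    exact mul_pos (exp_pos _) (mul_pos hγ (mul_pos_of_neg_of_neg (by linarith [hy.2])
      (by linarith [hy.2, optTransmitProb_lt_half γ])))
  · rw [quadratic_eq_mul_sub_optTransmitProb hγ.ne']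
    exact mul_neg_of_pos_of_neg (exp_pos _) (mul_neg_of_pos_of_neg hγ
      (mul_neg_of_pos_of_neg (by linarith [hy.1]) (by linarith [hy.2])))

theorem mul_one_sub_mul_exp_inv_two_add {γ : ℝ} (hγ : 0 ≤ γ) :
    1 / (2 + γ) * (1 - 1 / (2 + γ)) * exp (-(1 / (2 + γ) * γ)) =
      (1 + γ) / (2 + γ) ^ 2 * exp (-(γ / (2 + γ))) := by
  have : 2 + γ ≠ 0 := by positivity
  rw [show -(1 / (2 + γ) * γ) = -(γ / (2 + γ)) by ring]
  congr 1
  field_simp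
  ring

/-- For `γ > 0`, the half-duplex probabilistic throughput `f(p) = p(1-p) exp (-pγ)` on
`(0,1)` attains its maximum uniquely at
`p_opt = 1/γ + (1 - √(1 + 4/γ²))/2 ∈ (0, 1/2)`, which is the root in `(0,1)` of
`p² - p(1 + 2/γ) + 1/γ = 0`, and the maximum value satisfies
`f(p_opt) ≥ ((1+γ)/(2+γ)²) exp (-γ/(2+γ))`. -/
theorem half_duplex_throughput_max (γ : ℝ) (hγ : 0 < γ) :
    0 < 1 / γ + (1 - Real.sqrt (1 + 4 / γ ^ 2)) / 2 ∧
    1 / γ + (1 - Real.sqrt (1 + 4 / γ ^ 2)) / 2 < 1 / 2 ∧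
    (1 / γ + (1 - Real.sqrt (1 + 4 / γ ^ 2)) / 2) ^ 2 -
        (1 / γ + (1 - Real.sqrt (1 + 4 / γ ^ 2)) / 2) * (1 + 2 / γ) + 1 / γ = 0 ∧
    (∀ p : ℝ, 0 < p → p < 1 → p ≠ 1 / γ + (1 - Real.sqrt (1 + 4 / γ ^ 2)) / 2 →
      p * (1 - p) * Real.exp (-(p * γ)) <
        (1 / γ + (1 - Real.sqrt (1 + 4 / γ ^ 2)) / 2) *
          (1 - (1 / γ + (1 - Real.sqrt (1 + 4 / γ ^ 2)) / 2)) *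
          Real.exp (-((1 / γ + (1 - Real.sqrt (1 + 4 / γ ^ 2)) / 2) * γ))) ∧
    ((1 + γ) / (2 + γ) ^ 2) * Real.exp (-(γ / (2 + γ))) ≤
      (1 / γ + (1 - Real.sqrt (1 + 4 / γ ^ 2)) / 2) *
        (1 - (1 / γ + (1 - Real.sqrt (1 + 4 / γ ^ 2)) / 2)) *
        Real.exp (-((1 / γ + (1 - Real.sqrt (1 + 4 / γ ^ 2)) / 2) * γ)) := by
  have hmax : ∀ p : ℝ, 0 < p → p < 1 → p ≠ optTransmitProb γ → _ :=
    fun p hp0 hp1 hp ↦ mul_one_sub_mul_exp_lt_optTransmitProb hγ hp0 hp1 hp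
  refine ⟨optTransmitProb_pos hγ, optTransmitProb_lt_half γ, optTransmitProb_quadratic γ, hmax, ?_⟩
  rw [← mul_one_sub_mul_exp_inv_two_add hγ.le]
  have h2γ : 1 / (2 + γ) < 1 := by rw [div_lt_one (by positivity)]; linarith
  rcases eq_or_ne (1 / (2 + γ)) (optTransmitProb γ) with h | h
  · exact (congrArg (fun p ↦ p * (1 - p) * exp (-(p * γ))) h).le
  · exact (hmax _ (by positivity) h2γ h).le
end

section
/- For every c > 0, the improper integral c·∫₀^∞ e^{−ct} log(1+t²) dt converges and equals 2·Re( e^{ic} · ∫₁^∞ e^{−icx} x^{−1} dx ), i.e., it equals e^{ic}E₁(ic) + e^{−ic}E₁(−ic) where E₁(z) = ∫₁^∞ e^{−xz} x^{−1} dx is the exponential integral. Consequently, the ergodic capacity of a unit-distance link in a two-dimensional Poisson ALOHA network with Rayleigh fading and α = 4 is C = 2Re{q}cos(c_p) − 2Im{q}sin(c_p) with q = E₁(i c_p) and c_p = pC₂(4) = pπ²/2. -/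
/-!
Integrating by parts against `e^{-ct}` turns `c ∫₀^∞ e^{-ct} log (1 + t²) dt` into
`∫₀^∞ e^{-ct} 2t/(1 + t²) dt = 2 Re ∫₀^∞ e^{-ct}/(t + i) dt`, and
`e^{-ct}/(t + i) = e^{ic} f(t + i)` for `f z = e^{-cz}/z`. Cauchy's theorem on the rectangle
with corners `i` and `R + Ri` moves the path `t ↦ t + i` onto the imaginary half-line `y ↦ iy`,
`y ≥ 1`: since `|f z| ≤ e^{-c Re z}/|z|`, the top and right sides vanish as `R → ∞`. Along that
half-line `i ∫₁^R f(iy) dy = ∫₁^R e^{-icx}/x dx`, so `q = ∫₀^∞ f(t + i) dt`.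
-/

open MeasureTheory Set Filter Real
open scoped Interval Topology Complex
open Complex (I)

theorem tendsto_exp_neg_mul_atTop_nhds_zero {c : ℝ} (hc : 0 < c) :
    Tendsto (fun t => exp (-c * t)) atTop (𝓝 0) :=
  tendsto_exp_comp_nhds_zero.2 (tendsto_id.const_mul_atTop_of_neg (neg_neg_of_pos hc))

theorem exp_neg_mul_mul_isBigO {g : ℝ → ℝ} {b c : ℝ}
    (hg : g =O[atTop] fun t => exp (b * t)) :
    (fun t => exp (-(c * t)) * g t) =O[atTop] fun t => exp (-(c - b) * t) := by
  refine ((Asymptotics.isBigO_refl (fun t => exp (-(c * t))) atTop).mul hg).congr_right ?_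
  intro t
  rw [← exp_add]
  ring_nf

theorem integrableOn_exp_neg_mul_mul_of_isBigO {g : ℝ → ℝ} {b c : ℝ} (hbc : b < c)
    (hg : ContinuousOn g (Ici 0)) (hO : g =O[atTop] fun t => exp (b * t)) :
    IntegrableOn (fun t => exp (-(c * t)) * g t) (Ioi 0) :=
  integrable_of_isBigO_exp_neg (sub_pos.2 hbc)
    ((by fun_prop : Continuous fun t => exp (-(c * t))).continuousOn.mul hg)
    (exp_neg_mul_mul_isBigO hO)

theorem tendsto_exp_neg_mul_mul_of_isBigO {g : ℝ → ℝ} {b c : ℝ} (hbc : b < c)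
    (hO : g =O[atTop] fun t => exp (b * t)) :
    Tendsto (fun t => exp (-(c * t)) * g t) atTop (𝓝 0) :=
  (exp_neg_mul_mul_isBigO hO).trans_tendsto (tendsto_exp_neg_mul_atTop_nhds_zero (sub_pos.2 hbc))

theorem integral_exp_neg_mul_mul_deriv {g g' : ℝ → ℝ} {c : ℝ}
    (hg0 : ContinuousWithinAt g (Ioi 0) 0) (hderiv : ∀ t ∈ Ioi 0, HasDerivAt g (g' t) t)
    (hint : IntegrableOn (fun t => exp (-(c * t)) * g t) (Ioi 0))
    (hint' : IntegrableOn (fun t => exp (-(c * t)) * g' t) (Ioi 0))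
    (hlim : Tendsto (fun t => exp (-(c * t)) * g t) atTop (𝓝 0)) :
    ∫ t in Ioi 0, exp (-(c * t)) * g' t = c * (∫ t in Ioi 0, exp (-(c * t)) * g t) - g 0 := by
  have hexp : ∀ t : ℝ, HasDerivAt (fun t => exp (-(c * t))) (-c * exp (-(c * t))) t := by
    intro t
    simpa [mul_comm] using ((hasDerivAt_id t).const_mul c).neg.exp
  have h0 : Tendsto (fun t => exp (-(c * t)) * g t) (𝓝[>] 0) (𝓝 (g 0)) := by
    simpa using (((by fun_prop : Continuous fun t => exp (-(c * t))).tendsto 0).mono_left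
      nhdsWithin_le_nhds).mul hg0
  have hmul : ∀ t, -c * exp (-(c * t)) * g t = -c * (exp (-(c * t)) * g t) :=
    fun t => mul_assoc _ _ _
  rw [integral_Ioi_mul_deriv_eq_deriv_mul (fun t _ => hexp t) hderiv hint'
    (by simp only [Pi.mul_def, hmul]; exact hint.const_mul (-c)) h0 hlim]
  simp only [hmul, integral_const_mul]
  ring

theorem continuous_log_one_add_sq : Continuous fun t : ℝ => log (1 + t ^ 2) := by
  fun_prop (disch := intro t; positivity)

theorem hasDerivAt_log_one_add_sq (t : ℝ) :
    HasDerivAt (fun t => log (1 + t ^ 2)) (2 * t / (1 + t ^ 2)) t := by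
  simpa using ((hasDerivAt_pow 2 t).const_add 1).log (by positivity)

theorem log_one_add_sq_isBigO {b : ℝ} (hb : 0 < b) :
    (fun t => log (1 + t ^ 2)) =O[atTop] fun t => exp (b * t) := by
  refine (Asymptotics.IsBigO.of_bound 1 (Eventually.of_forall fun t => ?_)).trans
    (isLittleO_pow_exp_pos_mul_atTop 2 hb).isBigO
  have hlog := log_le_sub_one_of_pos (by positivity : 0 < 1 + t ^ 2)
  rw [norm_of_nonneg (log_nonneg (by nlinarith)), one_mul, norm_of_nonneg (by positivity)]
  linarith

theorem abs_two_mul_div_one_add_sq_le_one (t : ℝ) : |2 * t / (1 + t ^ 2)| ≤ 1 := by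
  rw [abs_div, abs_of_pos (by positivity : 0 < 1 + t ^ 2), div_le_one (by positivity), abs_mul,
    abs_two]
  nlinarith [sq_nonneg (|t| - 1), sq_abs t]

theorem integrableOn_exp_neg_mul_mul_log_one_add_sq {c : ℝ} (hc : 0 < c) :
    IntegrableOn (fun t => exp (-(c * t)) * log (1 + t ^ 2)) (Ioi 0) :=
  integrableOn_exp_neg_mul_mul_of_isBigO (half_lt_self hc) continuous_log_one_add_sq.continuousOn
    (log_one_add_sq_isBigO (half_pos hc))

theorem mul_integral_exp_neg_mul_mul_log_one_add_sq {c : ℝ} (hc : 0 < c) :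
    c * ∫ t in Ioi 0, exp (-(c * t)) * log (1 + t ^ 2) =
      ∫ t in Ioi 0, exp (-(c * t)) * (2 * t / (1 + t ^ 2)) := by
  have hbounded : (fun t : ℝ => 2 * t / (1 + t ^ 2)) =O[atTop] fun t => exp (0 * t) :=
    Asymptotics.IsBigO.of_bound 1 (Eventually.of_forall fun t => by
      rw [zero_mul, exp_zero, norm_one, one_mul, norm_eq_abs]
      exact abs_two_mul_div_one_add_sq_le_one t)
  rw [integral_exp_neg_mul_mul_deriv continuous_log_one_add_sq.continuousWithinAt
    (fun t _ => hasDerivAt_log_one_add_sq t) (integrableOn_exp_neg_mul_mul_log_one_add_sq hc)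
    (integrableOn_exp_neg_mul_mul_of_isBigO hc
      (by fun_prop (disch := intro t; positivity) : Continuous _).continuousOn hbounded)
    (tendsto_exp_neg_mul_mul_of_isBigO (half_lt_self hc) (log_one_add_sq_isBigO (half_pos hc)))]
  simp

/-- Cauchy's theorem on the rectangles with corners `i` and `R + Ri`. -/
theorem tendsto_I_smul_integral_mul_I_of_differentiableOn {E : Type*} [NormedAddCommGroup E]
    [NormedSpace ℂ E] [CompleteSpace E] {f : ℂ → E} {L : E}
    (hf : DifferentiableOn ℂ f {z | 0 ≤ z.re ∧ 1 ≤ z.im})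
    (hbot : Tendsto (fun R : ℝ => ∫ x in 0..R, f (x + I)) atTop (𝓝 L))
    (htop : Tendsto (fun R : ℝ => ∫ x in 0..R, f (x + R * I)) atTop (𝓝 0))
    (hright : Tendsto (fun R : ℝ => ∫ y in 1..R, f (R + y * I)) atTop (𝓝 0)) :
    Tendsto (fun R : ℝ => I • ∫ y in 1..R, f (y * I)) atTop (𝓝 L) := by
  have hrect : ∀ᶠ R : ℝ in atTop,
      (∫ x in 0..R, f (x + I)) - (∫ x in 0..R, f (x + R * I)) +
      I • (∫ y in 1..R, f (R + y * I)) = I • ∫ y in 1..R, f (y * I) := by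
    filter_upwards [eventually_ge_atTop 1] with R hR
    have hsub : [[(I).re, (R + R * I).re]] ×ℂ [[(I).im, (R + R * I).im]] ⊆
        {z | 0 ≤ z.re ∧ 1 ≤ z.im} := by
      intro z hz
      simp only [Complex.mem_reProdIm, Complex.I_re, Complex.I_im, Complex.add_re,
        Complex.add_im, Complex.ofReal_re, Complex.ofReal_im, Complex.mul_re, Complex.mul_im,
        mul_zero, mul_one, sub_zero, add_zero, zero_add, uIcc_of_le hR,
        uIcc_of_le (hR.trans' zero_le_one)] at hz
      exact ⟨hz.1.1, hz.2.1⟩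
    have hcauchy := Complex.integral_boundary_rect_eq_zero_of_differentiableOn f I (R + R * I)
      (hf.mono hsub)
    simp only [Complex.I_re, Complex.I_im, Complex.add_re, Complex.add_im, Complex.ofReal_re,
      Complex.ofReal_im, Complex.mul_re, Complex.mul_im, mul_zero, mul_one, sub_zero, add_zero,
      zero_add, Complex.ofReal_zero, Complex.ofReal_one, one_mul] at hcauchy
    exact sub_eq_zero.1 hcauchy
  simpa using ((hbot.sub htop).add (hright.const_smul I)).congr' hrect

theorem norm_cexp_neg_mul_div_le {c a : ℝ} {z : ℂ} (ha : 0 < a) (hz : a ≤ ‖z‖) :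
    ‖cexp (-c * z) / z‖ ≤ exp (-c * z.re) / a := by
  rw [norm_div, Complex.norm_exp]
  simpa using div_le_div_of_nonneg_left (exp_pos _).le ha hz

theorem integrableOn_cexp_neg_mul_add_I_div {c : ℝ} (hc : 0 < c) :
    IntegrableOn (fun x : ℝ => cexp (-c * (x + I)) / (x + I)) (Ioi 0) := by
  refine (exp_neg_integrableOn_Ioi 0 hc).mono' (Continuous.aestronglyMeasurable ?_) ?_
  · refine Continuous.div (by fun_prop) (by fun_prop) fun x h => ?_
    simpa using congrArg Complex.im h
  · refine ae_of_all _ fun x => ?_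
    exact (norm_cexp_neg_mul_div_le one_pos
      (by simpa using Complex.abs_im_le_norm (x + I))).trans_eq (by simp)

theorem tendsto_integral_cexp_neg_mul_div_top {c : ℝ} (hc : 0 < c) :
    Tendsto (fun R : ℝ => ∫ x in 0..R, cexp (-c * (x + R * I)) / (x + R * I))
      atTop (𝓝 0) := by
  have hexp : IntegrableOn (fun x => exp (-c * x)) (Ioi 0) := exp_neg_integrableOn_Ioi 0 hc
  refine squeeze_zero_norm' ?_
    ((tendsto_inv_atTop_zero (𝕜 := ℝ)).mul_const c⁻¹ |>.trans_eq ?_)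
  · filter_upwards [eventually_gt_atTop 0] with R hR
    have hbound : ∀ x : ℝ,
        ‖cexp (-c * (x + R * I)) / (x + R * I)‖ ≤ exp (-c * x) / R := by
      intro x
      exact (norm_cexp_neg_mul_div_le hR
        (by simpa [abs_of_pos hR] using Complex.abs_im_le_norm (x + R * I))).trans_eq (by simp)
    calc ‖∫ x in 0..R, cexp (-c * (x + R * I)) / (x + R * I)‖
        ≤ ∫ x in 0..R, exp (-c * x) / R :=
          intervalIntegral.norm_integral_le_of_norm_le hR.le (ae_of_all _ fun x _ => hbound x)
            ((by fun_prop : Continuous fun x => exp (-c * x) / R).intervalIntegrable 0 R)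
      _ ≤ ∫ x in Ioi 0, exp (-c * x) / R := by
          rw [intervalIntegral.integral_of_le hR.le]
          exact setIntegral_mono_set (hexp.div_const R)
            (ae_of_all _ fun x => by positivity) Ioc_subset_Ioi_self.eventuallyLE
      _ = R⁻¹ * c⁻¹ := by
          rw [integral_div, integral_exp_mul_Ioi (neg_neg_of_pos hc)]
          field_simp
          simp
  · simp

theorem tendsto_integral_cexp_neg_mul_div_right {c : ℝ} (hc : 0 < c) :
    Tendsto (fun R : ℝ => ∫ y in 1..R, cexp (-c * (R + y * I)) / (R + y * I))
      atTop (𝓝 0) := by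
  refine squeeze_zero_norm' ?_ (tendsto_exp_neg_mul_atTop_nhds_zero hc)
  filter_upwards [eventually_ge_atTop 1] with R hR
  have hR0 : 0 < R := zero_lt_one.trans_le hR
  have hbound : ∀ y ∈ Ι (1 : ℝ) R,
      ‖cexp (-c * (R + y * I)) / (R + y * I)‖ ≤ exp (-c * R) / R := by
    intro y _
    exact (norm_cexp_neg_mul_div_le hR0
      (by simpa [abs_of_pos hR0] using Complex.abs_re_le_norm (R + y * I))).trans_eq (by simp)
  calc ‖∫ y in 1..R, cexp (-c * (R + y * I)) / (R + y * I)‖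
      ≤ exp (-c * R) / R * |R - 1| := intervalIntegral.norm_integral_le_of_norm_le_const hbound
    _ ≤ exp (-c * R) / R * R := by
        gcongr
        rw [abs_of_nonneg (by linarith)]
        linarith
    _ = exp (-c * R) := div_mul_cancel₀ _ hR0.ne'

/-- At `y = 0` both sides are `0`, by the convention `x / 0 = 0`. -/
theorem I_smul_cexp_neg_mul_div_mul_I (c : ℂ) (y : ℝ) :
    I • (cexp (-c * (y * I)) / (y * I)) = cexp (-(c * I) * y) / y := by
  rcases eq_or_ne y 0 with rfl | hy
  · simp
  · rw [smul_eq_mul]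
    field_simp

theorem tendsto_integral_cexp_neg_mul_I_div {c : ℝ} (hc : 0 < c) :
    Tendsto (fun R : ℝ => ∫ x in 1..R, cexp (-(c * I) * x) / x) atTop
      (𝓝 (∫ x : ℝ in Ioi 0, cexp (-c * (x + I)) / (x + I))) := by
  have hf : DifferentiableOn ℂ (fun z => cexp (-c * z) / z) {z | 0 ≤ z.re ∧ 1 ≤ z.im} := by
    refine fun z hz => (DifferentiableAt.div (by fun_prop) (by fun_prop) ?_).differentiableWithinAt
    rintro rfl
    exact absurd hz.2 (by norm_num)
  have hrotate := tendsto_I_smul_integral_mul_I_of_differentiableOn hf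
    (intervalIntegral_tendsto_integral_Ioi 0 (integrableOn_cexp_neg_mul_add_I_div hc) tendsto_id)
    (tendsto_integral_cexp_neg_mul_div_top hc) (tendsto_integral_cexp_neg_mul_div_right hc)
  simpa only [← intervalIntegral.integral_smul, I_smul_cexp_neg_mul_div_mul_I] using hrotate

theorem re_cexp_mul_I_mul (c : ℝ) (q : ℂ) :
    (cexp (c * I) * q).re = q.re * cos c - q.im * sin c := by
  rw [Complex.mul_re, Complex.exp_ofReal_mul_I_re, Complex.exp_ofReal_mul_I_im]
  ring

theorem two_mul_re_cexp_mul_I_mul_cexp_neg_mul_add_I_div (c x : ℝ) :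
    2 * (cexp (c * I) * (cexp (-c * (x + I)) / (x + I))).re =
      exp (-(c * x)) * (2 * x / (1 + x ^ 2)) := by
  have hexp : cexp (c * I) * cexp (-c * (x + I)) = (exp (-(c * x)) : ℝ) := by
    rw [← Complex.exp_add, Complex.ofReal_exp]
    push_cast
    ring_nf
  have hnormSq : Complex.normSq (x + I) = 1 + x ^ 2 := by
    simp [Complex.normSq_apply]
    ring
  rw [mul_div_assoc', hexp]
  simp only [Complex.div_re, Complex.ofReal_re, Complex.ofReal_im, Complex.add_re,
    Complex.add_im, Complex.I_re, Complex.I_im, hnormSq]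
  field_simp
  ring

/-- For `c > 0`, the integral `c ∫₀^∞ e^{-ct} log (1+t²) dt` converges and equals
`2 Re (e^{ic} E₁(ic))` where `E₁(ic) = ∫₁^∞ e^{-icx} x⁻¹ dx` (an improper oscillatory
integral), i.e. it equals `2 Re{q} cos c - 2 Im{q} sin c` with `q = E₁(ic)`.
With `c = c_p = p π²/2`, this is the ergodic capacity of a unit-distance link in a
two-dimensional Poisson ALOHA network with Rayleigh fading and `α = 4`. -/
theorem ergodic_capacity_alpha4 (c : ℝ) (hc : 0 < c) :
    IntegrableOn (fun t : ℝ => Real.exp (-(c * t)) * Real.log (1 + t ^ 2)) (Ioi 0) ∧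
    ∃ q : ℂ, Tendsto (fun R : ℝ => ∫ x in (1 : ℝ)..R, Complex.exp (-((c : ℂ) * Complex.I) * x) / x)
        atTop (nhds q) ∧
      c * (∫ t in Ioi (0 : ℝ), Real.exp (-(c * t)) * Real.log (1 + t ^ 2)) =
        2 * (Complex.exp ((c : ℂ) * Complex.I) * q).re ∧
      2 * (Complex.exp ((c : ℂ) * Complex.I) * q).re =
        2 * q.re * Real.cos c - 2 * q.im * Real.sin c := by
  refine ⟨integrableOn_exp_neg_mul_mul_log_one_add_sq hc, _,
    tendsto_integral_cexp_neg_mul_I_div hc, ?_, by rw [re_cexp_mul_I_mul]; ring⟩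
  rw [mul_integral_exp_neg_mul_mul_log_one_add_sq hc]
  simp_rw [← two_mul_re_cexp_mul_I_mul_cexp_neg_mul_add_I_div]
  rw [integral_const_mul, ← integral_const_mul (cexp (c * I))]
  exact congrArg _ (integral_re ((integrableOn_cexp_neg_mul_add_I_div hc).const_mul _))
end
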